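/- arXiv:1206.6160 — 7 statements merged into one kernel-verified Lean document; each statement's English description precedes it below -/
import Mathlib

section
/- Let G be a finite group and let A = {a₁, …, aₙ} and B = {b₁, …, bₘ} be two non-empty subsets of G (with the aᵢ pairwise distinct and the bⱼ pairwise distinct) such that n + m − 1 ≤ p(G). Then there exist indices i₂, …, iₙ with 1 ≤ i₂, …, iₙ ≤ m such that the n + m − 1 elements a₁·b₁, a₁·b₂, …, a₁·bₘ, a₂·b_{i₂}, …, aₙ·b_{iₙ} are all distinct. -/
/-!
By Hall's marriage theorem it suffices that for every set `S` of the `aᵢ` other than `a₁`,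
the products `S·B` contain at least `|S|` elements outside `a₁·B`. Since every nontrivial element
of `G` has order at least `p(G) ≥ |S| + m`, the Cauchy–Davenport inequality for arbitrary groups
gives `|({a₁} ∪ S)·B| ≥ |S| + m`, and removing the `m` elements of `a₁·B` leaves enough.
-/

open Finset Function
open scoped Pointwise

namespace Monoid

lemma minFac_card_le_minOrder (G : Type*) [Group G] [Fintype G] :
    ((Fintype.card G).minFac : ℕ∞) ≤ minOrder G := by
  refine le_minOrder.2 fun g hg _ ↦ ?_
  have hg₂ : 2 ≤ orderOf g := by
    have := orderOf_pos g
    have := mt orderOf_eq_one_iff.1 hg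
    omega
  exact_mod_cast Nat.minFac_le_of_dvd hg₂ orderOf_dvd_card

end Monoid

section Hall

variable {G ι : Type*} [Group G] [DecidableEq G] [Fintype ι]

lemma card_le_card_biUnion_smul_sdiff_smul {a : ι → G} (ha : Injective a) {x₀ : G}
    (hx₀ : ∀ i, a i ≠ x₀) {B : Finset G} (hB : B.Nonempty)
    (h : (Fintype.card ι + #B : ℕ∞) ≤ Monoid.minOrder G) (s : Finset ι) :
    #s ≤ #(s.biUnion fun i ↦ a i • B \ x₀ • B) := by
  set A := insert x₀ (s.image a)
  have hA : #A = #s + 1 := by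
    rw [card_insert_of_notMem (by simpa using fun i _ ↦ hx₀ i), card_image_of_injective _ ha]
  have hcd : #s + #B ≤ #(A * B) := by
    have hs : (#s : ℕ∞) ≤ Fintype.card ι := by exact_mod_cast card_le_univ s
    have : ((#s + #B : ℕ) : ℕ∞) ≤ #(A * B) := calc
      _ ≤ min (Monoid.minOrder G) ↑(#A + #B - 1) :=
        le_min (by push_cast; exact le_trans (by gcongr) h) (by rw [hA]; norm_cast; omega)
      _ ≤ _ := cauchy_davenport_minOrder_mul (insert_nonempty x₀ (s.image a)) hB
    exact_mod_cast this
  have hsub : (A * B) \ x₀ • B ⊆ s.biUnion fun i ↦ a i • B \ x₀ • B := by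
    simp only [subset_iff, mem_sdiff, mem_mul, mem_biUnion, A, mem_insert, mem_image]
    rintro _ ⟨⟨y, rfl | ⟨i, hi, rfl⟩, z, hz, rfl⟩, hyz⟩
    · exact absurd (smul_mem_smul_finset hz) hyz
    · exact ⟨i, hi, smul_mem_smul_finset hz, hyz⟩
  calc #s = #s + #B - #(x₀ • B) := by rw [card_smul_finset]; omega
    _ ≤ #(A * B) - #(x₀ • B) := by omega
    _ ≤ #((A * B) \ x₀ • B) := le_card_sdiff _ _
    _ ≤ _ := card_le_card hsub

lemma exists_injective_sumElim_mul {κ : Type*} [Fintype κ] [Nonempty κ] {a : ι → G}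
    (ha : Injective a) {x₀ : G} (hx₀ : ∀ i, a i ≠ x₀) {b : κ → G} (hb : Injective b)
    (h : (Fintype.card ι + Fintype.card κ : ℕ∞) ≤ Monoid.minOrder G) :
    ∃ k : ι → κ, Injective (Sum.elim (fun j ↦ x₀ * b j) fun i ↦ a i * b (k i)) := by
  set B := univ.image b
  have hB : #B = Fintype.card κ := card_image_of_injective _ hb
  obtain ⟨f, hf, hfB⟩ := (all_card_le_biUnion_card_iff_exists_injective _).1 <|
    card_le_card_biUnion_smul_sdiff_smul ha hx₀ (univ_nonempty.image b) (hB ▸ h)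
  have hfa : ∀ i, ∃ j, a i * b j = f i := by
    simpa [B, mem_smul_finset] using fun i ↦ (mem_sdiff.1 (hfB i)).1
  choose k hk using hfa
  refine ⟨k, (mul_right_injective x₀).comp hb |>.sumElim (by simpa only [comp_def, hk]) ?_⟩
  intro j i hji
  refine (mem_sdiff.1 (hfB i)).2 ?_
  rw [← hk, ← hji]
  exact smul_mem_smul_finset (mem_image_of_mem b (mem_univ j))

end Hall

/-- Given subsets `A = {a₁,…,aₙ}` and `B = {b₁,…,bₘ}` of a finite group `G`
with `n + m − 1 ≤ p(G)`, there exist indices `i₂,…,iₙ` such that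
`a₁·b₁, …, a₁·bₘ, a₂·b_{i₂}, …, aₙ·b_{iₙ}` are all distinct. -/
theorem stmt_3 {G : Type*} [Group G] [Fintype G] {n m : ℕ}
    (hn : 0 < n) (hm : 0 < m)
    (a : Fin n → G) (b : Fin m → G)
    (ha : Function.Injective a) (hb : Function.Injective b)
    (hnm : n + m - 1 ≤ (Fintype.card G).minFac) :
    ∃ k : Fin n → Fin m,
      Function.Injective
        (Sum.elim (fun j : Fin m => a ⟨0, hn⟩ * b j)
          (fun i : {i : Fin n // i ≠ ⟨0, hn⟩} => a i.1 * b (k i.1))) := by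
  classical
  have : Nonempty (Fin m) := ⟨⟨0, hm⟩⟩
  have hcard : (Fintype.card {i : Fin n // i ≠ ⟨0, hn⟩} + Fintype.card (Fin m) : ℕ∞) ≤
      Monoid.minOrder G := by
    rw [Fintype.card_subtype_compl, Fintype.card_fin, Fintype.card_fin, Fintype.card_subtype_eq]
    refine le_trans ?_ (Monoid.minFac_card_le_minOrder G)
    exact_mod_cast (by omega : n - 1 + m ≤ n + m - 1).trans hnm
  obtain ⟨k, hk⟩ := exists_injective_sumElim_mul (ha.comp Subtype.val_injective)
    (fun i ↦ ha.ne i.2) hb hcard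
  refine ⟨extend Subtype.val k fun _ ↦ ⟨0, hm⟩, ?_⟩
  simpa only [Subtype.val_injective.extend_apply, comp_apply] using hk
end

section
/- Let G be a finite group with p(G) > 2 and let σ be an automorphism of G of odd order. Let x₁, x₂, y ∈ G with x₁ ≠ x₂. If the set {σ(x₁)·y, σ(x₂)·y, σ(y)·x₁, σ(y)·x₂} has exactly 2 elements, then σ(x₁)·y = σ(y)·x₁ and σ(x₂)·y = σ(y)·x₂. -/
/-!
Since `p(G) > 2`, `|G|` is odd. Comparing the two pairs `{σ(x₁)y, σ(x₂)y}` and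
`{σ(y)x₁, σ(y)x₂}`, which have two elements each, the only alternative to the claim is
`σ(y)x₁ = σ(x₂)y` and `σ(y)x₂ = σ(x₁)y`. Then `t = x₁x₂⁻¹ ≠ 1` satisfies
`σ(t) = σ(y) t⁻¹ σ(y)⁻¹`, so `σ` swaps the conjugacy classes of `t` and `t⁻¹`; as `σ` has
odd order, `t` is conjugate to `t⁻¹`. In a group of odd order this forces `t = 1`.
-/

theorem Nat.odd_of_two_lt_minFac {n : ℕ} (h : 2 < n.minFac) : Odd n := by
  by_contra hn
  rw [Nat.not_odd_iff_even] at hn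
  exact absurd (Nat.minFac_le_of_dvd le_rfl hn.two_dvd) h.not_ge

theorem Finset.mem_pair_of_card_eq_two {α : Type*} [DecidableEq α] {a₁ a₂ b₁ b₂ : α}
    (ha : a₁ ≠ a₂) (h : ({a₁, a₂, b₁, b₂} : Finset α).card = 2) :
    b₁ ∈ ({a₁, a₂} : Finset α) ∧ b₂ ∈ ({a₁, a₂} : Finset α) := by
  have hsub : ({a₁, a₂} : Finset α) ⊆ {a₁, a₂, b₁, b₂} := by
    simp [Finset.insert_subset_iff]
  have heq := Finset.eq_of_subset_of_card_le hsub (by rw [h, Finset.card_pair ha])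
  rw [heq]
  simp

section Conj

variable {G : Type*} [Group G]

theorem IsConj.inv {a b : G} (h : IsConj a b) : IsConj a⁻¹ b⁻¹ := by
  obtain ⟨c, rfl⟩ := isConj_iff.1 h
  exact isConj_iff.2 ⟨c, by group⟩

theorem MulAut.isConj_pow_apply {τ : MulAut G} {t : G} (h : IsConj t (τ t)) (k : ℕ) :
    IsConj t ((τ ^ k) t) := by
  induction k with
  | zero => exact IsConj.refl t
  | succ k ih =>
    rw [pow_succ', MulAut.mul_apply]
    exact h.trans ((τ : G →* G).map_isConj ih)

theorem MulAut.isConj_inv_of_isConj_inv_apply {σ : MulAut G} (hσ : Odd (orderOf σ)) {t : G}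
    (h : IsConj t⁻¹ (σ t)) : IsConj t t⁻¹ := by
  have hsq : IsConj t ((σ ^ 2) t) := by
    have hσh := (σ : G →* G).map_isConj h
    rw [MonoidHom.coe_coe, map_inv] at hσh
    simpa only [inv_inv, sq, MulAut.mul_apply] using h.inv.trans hσh
  obtain ⟨k, hk⟩ := hσ
  have hfix : σ (((σ ^ 2) ^ k) t) = t := by
    rw [← MulAut.mul_apply, ← pow_mul, ← pow_succ', ← hk, pow_orderOf_eq_one,
      MulAut.one_apply]
  have hcycle := (σ : G →* G).map_isConj (MulAut.isConj_pow_apply hsq k)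
  rw [MonoidHom.coe_coe, hfix] at hcycle
  exact (h.trans hcycle).symm

theorem eq_one_of_isConj_inv [Finite G] (hG : Odd (Nat.card G)) {t : G} (h : IsConj t t⁻¹) :
    t = 1 := by
  obtain ⟨g, hg⟩ := isConj_iff.1 h
  have hsq : Commute (g ^ 2) t := by
    refine (mul_inv_eq_iff_eq_mul.1 ?_ : g ^ 2 * t = t * g ^ 2)
    calc g ^ 2 * t * (g ^ 2)⁻¹ = g * (g * t * g⁻¹) * g⁻¹ := by rw [sq]; group
      _ = g * t⁻¹ * g⁻¹ := by rw [hg]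
      _ = (g * t * g⁻¹)⁻¹ := by group
      _ = t := by rw [hg, inv_inv]
  -- `g` has odd order, so it is a power of `g ^ 2`
  obtain ⟨j, hj⟩ := hG.of_dvd_nat (orderOf_dvd_natCard g)
  have hgpow : (g ^ 2) ^ (j + 1) = g := by
    rw [← pow_mul, show 2 * (j + 1) = orderOf g + 1 by omega, pow_succ, pow_orderOf_eq_one,
      one_mul]
  have hcomm : Commute g t := hgpow ▸ hsq.pow_left (j + 1)
  have hinv : t⁻¹ = t := by rw [← hg, hcomm.eq, mul_inv_cancel_right]
  have hdvd : orderOf t ∣ 2 :=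
    orderOf_dvd_of_pow_eq_one (by rw [sq]; exact inv_eq_iff_mul_eq_one.1 hinv)
  exact orderOf_eq_one_iff.1 <|
    ((hG.of_dvd_nat (orderOf_dvd_natCard t)).coprime_two_right).eq_one_of_dvd hdvd

end Conj

/-- Let `G` be a finite group with `p(G) > 2` and `σ` an automorphism of odd
order. If `x₁ ≠ x₂` and `{σ(x₁)·y, σ(x₂)·y, σ(y)·x₁, σ(y)·x₂}` has exactly 2
elements, then `σ(xᵢ)·y = σ(y)·xᵢ` for `i = 1, 2`. -/
theorem stmt_6 {G : Type*} [Group G] [Fintype G] [DecidableEq G]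
    (hp : 2 < (Fintype.card G).minFac) (σ : MulAut G) (hσ : Odd (orderOf σ))
    (x₁ x₂ y : G) (hx : x₁ ≠ x₂)
    (hcard : ({σ x₁ * y, σ x₂ * y, σ y * x₁, σ y * x₂} : Finset G).card = 2) :
    σ x₁ * y = σ y * x₁ ∧ σ x₂ * y = σ y * x₂ := by
  have hG : Odd (Nat.card G) := Nat.card_eq_fintype_card (α := G) ▸ Nat.odd_of_two_lt_minFac hp
  have hne : σ y * x₁ ≠ σ y * x₂ := (mul_right_injective _).ne hx
  obtain ⟨h₁, h₂⟩ :=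
    Finset.mem_pair_of_card_eq_two ((mul_left_injective y).ne (σ.injective.ne hx)) hcard
  simp only [Finset.mem_insert, Finset.mem_singleton] at h₁ h₂
  rcases h₁ with h₁ | h₁ <;> rcases h₂ with h₂ | h₂
  · exact absurd (h₁.trans h₂.symm) hne
  · exact ⟨h₁.symm, h₂.symm⟩
  · have hconj : IsConj (x₁ * x₂⁻¹)⁻¹ (σ (x₁ * x₂⁻¹)) := by
      refine isConj_iff.2 ⟨σ y, ?_⟩
      rw [map_mul, map_inv, eq_mul_inv_of_mul_eq h₂.symm, eq_mul_inv_of_mul_eq h₁.symm]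
      group
    exact absurd (eq_one_of_isConj_inv hG (σ.isConj_inv_of_isConj_inv_apply hσ hconj))
      (mul_inv_eq_one.not.2 hx)
  · exact absurd (h₁.trans h₂.symm) hne
end

section
/- Let G be a finite group with p(G) > 3 and let σ be an automorphism of G of odd order. Let x₁, x₂, y₁, y₂ ∈ G with x₁ ≠ x₂ and y₁ ≠ y₂. Suppose σ(x₁)·x₂ = σ(x₂)·x₁ and σ(y₁)·y₂ = σ(y₂)·y₁, and suppose the set {σ(x₁)·y₁, σ(x₁)·y₂, σ(x₂)·y₁, σ(x₂)·y₂, σ(y₁)·x₁, σ(y₁)·x₂, σ(y₂)·x₁, σ(y₂)·x₂} has exactly 3 elements. Then σ(xᵢ)·yⱼ = σ(yⱼ)·xᵢ for all 1 ≤ i, j ≤ 2. -/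
/-!
Write `x₁ = u x₂`, so that `σ x₁ = σ x₂ u`, and `v = y₁ y₂⁻¹`. Four of the eight products form
`σ x₂ {1, u, v, uv} y₂`; as `|G|` has no prime factor below `5`, `u² ≠ 1`, so this set has at
most three elements only if `v = u` or `v = u⁻¹`, and swapping `y₁, y₂` reduces to `v = u`.
Then `σ x₂ {1, u, u²} y₂` is the whole three-element set, so it contains `σ y₂ {1, u, u²} x₂`:
with `c = (σ x₂)⁻¹ σ y₂` and `z = x₂ y₂⁻¹` we get `c uⁱ z = u^(eᵢ)` with `eᵢ < 3`. Hence
`w = c u c⁻¹` equals `u^(e₁ - e₀)` and `w² = u^(e₂ - e₀)`, which forces `2 e₁ = e₀ + e₂`. Now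
`w = 1` would give `u = 1`, and `w = u⁻¹` is impossible because `c` has odd order; so `w = u`
and `c z = 1`, which are the four equations.
-/

theorem four_lt_minFac_of_three_lt_minFac {n : ℕ} (h : 3 < n.minFac) : 4 < n.minFac := by
  refine lt_of_le_of_ne h fun h₄ => ?_
  have hprime := Nat.minFac_prime (n := n) fun h₁ => by rw [h₁, Nat.minFac_one] at h; omega
  rw [← h₄] at hprime
  norm_num at hprime

section
variable {G : Type*} [Group G]

theorem eq_one_of_pow_eq_one_of_lt_minFac {g : G} {n : ℕ} (hn : n ≠ 0)
    (hlt : n < (Nat.card G).minFac) (h : g ^ n = 1) : g = 1 :=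
  (Nat.coprime_of_lt_minFac hn hlt).pow_left_bijective.injective (h.trans (one_pow n).symm)

theorem eq_one_of_zpow_eq_one_of_natAbs_lt_minFac {g : G} {n : ℤ} (hn : n ≠ 0)
    (hlt : n.natAbs < (Nat.card G).minFac) (h : g ^ n = 1) : g = 1 :=
  eq_one_of_pow_eq_one_of_lt_minFac (Int.natAbs_ne_zero.mpr hn) hlt (pow_natAbs_eq_one.mpr h)

theorem minFac_le_orderOf [Finite G] {g : G} (hg : g ≠ 1) : (Nat.card G).minFac ≤ orderOf g := by
  have : orderOf g ≠ 1 := mt orderOf_eq_one_iff.mp hg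
  exact Nat.minFac_le_of_dvd (by have := (orderOf_pos g); omega) (orderOf_dvd_natCard g)

theorem odd_orderOf_of_two_lt_minFac [Finite G] (hG : 2 < (Nat.card G).minFac) (g : G) :
    Odd (orderOf g) :=
  have hcard : Odd (Nat.card G) := Nat.not_even_iff_odd.mp fun h =>
    (Nat.minFac_le_of_dvd le_rfl (even_iff_two_dvd.mp h)).not_gt hG
  hcard.of_dvd_nat (orderOf_dvd_natCard g)

theorem sq_eq_one_of_conj_eq_inv {c u : G} (hc : Odd (orderOf c)) (h : c * u * c⁻¹ = u⁻¹) :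
    u ^ 2 = 1 := by
  have hsq : Commute (c ^ 2) u := by
    rw [Commute, SemiconjBy, ← mul_inv_eq_iff_eq_mul, sq]
    calc c * c * u * (c * c)⁻¹ = c * (c * u * c⁻¹) * c⁻¹ := by group
      _ = c * u⁻¹ * c⁻¹ := by rw [h]
      _ = (c * u * c⁻¹)⁻¹ := by group
      _ = u := by rw [h, inv_inv]
  obtain ⟨k, hk⟩ := hc
  have hc : (c ^ 2) ^ (k + 1) = c := by
    rw [← pow_mul, show 2 * (k + 1) = orderOf c + 1 by omega, pow_succ, pow_orderOf_eq_one,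
      one_mul]
  have hcu : Commute c u := hc ▸ hsq.pow_left (k + 1)
  rw [hcu.eq, mul_inv_cancel_right] at h
  calc u ^ 2 = u * u⁻¹ := by rw [sq, ← h]
    _ = 1 := mul_inv_cancel u

theorem pow_conj_mul_eq_pow_of_forall_exists [Finite G] (hG : 3 < (Nat.card G).minFac)
    {u c z : G} (hu : u ≠ 1) (h : ∀ i < 3, ∃ j < 3, c * u ^ i * z = u ^ j) (i : ℕ) :
    c * u ^ i * z = u ^ i := by
  obtain ⟨e₀, he₀, h₀⟩ := h 0 (by norm_num)
  obtain ⟨e₁, he₁, h₁⟩ := h 1 (by norm_num)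
  obtain ⟨e₂, he₂, h₂⟩ := h 2 (by norm_num)
  rw [pow_zero, mul_one] at h₀
  set w := c * u * c⁻¹
  have hw : ∀ {k e : ℕ}, c * u ^ k * z = u ^ e → w ^ k = u ^ ((e : ℤ) - e₀) := by
    intro k e he
    rw [conj_pow, zpow_sub, zpow_natCast, zpow_natCast, ← he, ← h₀]
    group
  have hw₁ : w = u ^ ((e₁ : ℤ) - e₀) := by simpa using hw h₁
  have hG₅ := four_lt_minFac_of_three_lt_minFac hG
  have harith : 2 * e₁ = e₀ + e₂ := by
    have : u ^ (2 * ((e₁ : ℤ) - e₀) - ((e₂ : ℤ) - e₀)) = 1 := by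
      rw [zpow_sub, zpow_mul', ← hw₁, zpow_ofNat, hw h₂, mul_inv_cancel]
    by_contra hne
    exact hu (eq_one_of_zpow_eq_one_of_natAbs_lt_minFac (by omega) (by omega) this)
  have hconj : c * u ^ i * z = w ^ i * (c * z) := by rw [conj_pow]; group
  rw [hconj, h₀]
  obtain hd | hd | ⟨hd, rfl⟩ :
      (e₁ : ℤ) - e₀ = 0 ∨ (e₁ : ℤ) - e₀ = -1 ∨ ((e₁ : ℤ) - e₀ = 1 ∧ e₀ = 0) := by
    omega
  · rw [hd, zpow_zero, conj_eq_one_iff] at hw₁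
    exact absurd hw₁ hu
  · rw [hd, zpow_neg_one] at hw₁
    exact absurd (eq_one_of_pow_eq_one_of_lt_minFac two_ne_zero (by omega)
      (sq_eq_one_of_conj_eq_inv (odd_orderOf_of_two_lt_minFac (by omega) c) hw₁)) hu
  · rw [hd, zpow_one] at hw₁
    rw [hw₁, pow_zero, mul_one]

theorem ratio_eq_or_eq_inv_of_card_le_three [DecidableEq G] {X₁ X₂ x₁ x₂ y₁ y₂ : G}
    (hx : x₁ ≠ x₂) (hy : y₁ ≠ y₂) (hxx : X₁ * x₂ = X₂ * x₁)
    (hcard : ({X₁ * y₁, X₁ * y₂, X₂ * y₁, X₂ * y₂} : Finset G).card ≤ 3) :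
    x₁ * x₂⁻¹ = y₁ * y₂⁻¹ ∨ x₁ * x₂⁻¹ = y₂ * y₁⁻¹ := by
  have hX : X₁ = X₂ * (x₁ * x₂⁻¹) := by rw [← mul_assoc, ← hxx, mul_inv_cancel_right]
  have hX' : X₁ ≠ X₂ := fun h => hx (by rw [h] at hxx; exact (mul_left_cancel hxx).symm)
  by_contra! h
  have : ({X₁ * y₁, X₁ * y₂, X₂ * y₁, X₂ * y₂} : Finset G).card = 4 := by
    refine Finset.card_eq_four.mpr ⟨_, _, _, _, fun e => hy (mul_left_cancel e),
      fun e => hX' (mul_right_cancel e), fun e => h.2 ?_, fun e => h.1 ?_,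
      fun e => hX' (mul_right_cancel e), fun e => hy (mul_left_cancel e), rfl⟩
    · rw [hX, mul_assoc] at e
      exact eq_mul_inv_of_mul_eq (mul_left_cancel e)
    · rw [hX, mul_assoc] at e
      exact eq_mul_inv_of_mul_eq (mul_left_cancel e)
  omega

theorem mul_eq_mul_of_card_eq_three_of_ratio_eq [Finite G] [DecidableEq G]
    (hG : 3 < (Nat.card G).minFac) {X₁ X₂ Y₁ Y₂ x₁ x₂ y₁ y₂ : G} (hx : x₁ ≠ x₂)
    (hxx : X₁ * x₂ = X₂ * x₁) (hyy : Y₁ * y₂ = Y₂ * y₁)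
    (hcard : ({X₁ * y₁, X₁ * y₂, X₂ * y₁, X₂ * y₂,
        Y₁ * x₁, Y₁ * x₂, Y₂ * x₁, Y₂ * x₂} : Finset G).card = 3)
    (huv : x₁ * x₂⁻¹ = y₁ * y₂⁻¹) :
    X₁ * y₁ = Y₁ * x₁ ∧ X₁ * y₂ = Y₂ * x₁ ∧ X₂ * y₁ = Y₁ * x₂ ∧ X₂ * y₂ = Y₂ * x₂ := by
  obtain ⟨u, rfl⟩ : ∃ u, x₁ = u * x₂ := ⟨x₁ * x₂⁻¹, by group⟩
  rw [mul_inv_cancel_right] at huv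
  obtain rfl : y₁ = u * y₂ := eq_mul_of_mul_inv_eq huv.symm
  obtain rfl : X₁ = X₂ * u := mul_right_cancel (hxx.trans (mul_assoc _ _ _).symm)
  obtain rfl : Y₁ = Y₂ * u := mul_right_cancel (hyy.trans (mul_assoc _ _ _).symm)
  have hu : u ≠ 1 := by rintro rfl; simp at hx
  set T : Finset G := {X₂ * u * (u * y₂), X₂ * u * y₂, X₂ * (u * y₂), X₂ * y₂,
    Y₂ * u * (u * x₂), Y₂ * u * x₂, Y₂ * (u * x₂), Y₂ * x₂}
  have hsub : (Finset.range 3).image (fun j => X₂ * u ^ j * y₂) ⊆ T := by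
    intro t
    simp only [Finset.mem_image, Finset.mem_range]
    rintro ⟨j, hj, rfl⟩
    interval_cases j <;> simp [T, pow_succ, mul_assoc]
  have hinj : Set.InjOn (fun j => X₂ * u ^ j * y₂) (Finset.range 3) := by
    have hrange : (Finset.range 3 : Set ℕ) ⊆ Set.Iio (orderOf u) := fun j hj =>
      lt_of_lt_of_le (by simpa using hj) (hG.le.trans (minFac_le_orderOf hu))
    exact fun j hj k hk e =>
      pow_injOn_Iio_orderOf (hrange hj) (hrange hk) (mul_left_cancel (mul_right_cancel e))
  have hT : (Finset.range 3).image (fun j => X₂ * u ^ j * y₂) = T :=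
    Finset.eq_of_subset_of_card_le hsub (by rw [Finset.card_image_of_injOn hinj]; simp [T, hcard])
  have hmem : ∀ i < 3, ∃ j < 3, X₂⁻¹ * Y₂ * u ^ i * (x₂ * y₂⁻¹) = u ^ j := by
    intro i hi
    have : Y₂ * u ^ i * x₂ ∈ T := by interval_cases i <;> simp [T, pow_succ, mul_assoc]
    rw [← hT, Finset.mem_image] at this
    obtain ⟨j, hj, e⟩ := this
    refine ⟨j, Finset.mem_range.mp hj, ?_⟩
    rw [show X₂⁻¹ * Y₂ * u ^ i * (x₂ * y₂⁻¹) = X₂⁻¹ * (Y₂ * u ^ i * x₂) * y₂⁻¹ by group, ← e]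
    group
  have key : ∀ i, X₂ * u ^ i * y₂ = Y₂ * u ^ i * x₂ := by
    intro i
    calc X₂ * u ^ i * y₂ = X₂ * (X₂⁻¹ * Y₂ * u ^ i * (x₂ * y₂⁻¹)) * y₂ := by
          rw [pow_conj_mul_eq_pow_of_forall_exists hG hu hmem i]
      _ = Y₂ * u ^ i * x₂ := by group
  refine ⟨?_, ?_, ?_, ?_⟩
  · simpa [pow_succ, mul_assoc] using key 2
  · simpa [pow_succ, mul_assoc] using key 1
  · simpa [pow_succ, mul_assoc] using key 1
  · simpa [pow_succ, mul_assoc] using key 0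

end

theorem stmt_7_general {G : Type*} [Group G] [Fintype G] [DecidableEq G]
    (hp : 3 < (Fintype.card G).minFac) (σ : MulAut G)
    (x₁ x₂ y₁ y₂ : G) (hx : x₁ ≠ x₂) (hy : y₁ ≠ y₂)
    (hxx : σ x₁ * x₂ = σ x₂ * x₁) (hyy : σ y₁ * y₂ = σ y₂ * y₁)
    (hcard : ({σ x₁ * y₁, σ x₁ * y₂, σ x₂ * y₁, σ x₂ * y₂,
        σ y₁ * x₁, σ y₁ * x₂, σ y₂ * x₁, σ y₂ * x₂} : Finset G).card = 3) :
    (σ x₁ * y₁ = σ y₁ * x₁) ∧ (σ x₁ * y₂ = σ y₂ * x₁) ∧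
      (σ x₂ * y₁ = σ y₁ * x₂) ∧ (σ x₂ * y₂ = σ y₂ * x₂) := by
  rw [← Nat.card_eq_fintype_card] at hp
  have hsub : ({σ x₁ * y₁, σ x₁ * y₂, σ x₂ * y₁, σ x₂ * y₂} : Finset G) ⊆
      {σ x₁ * y₁, σ x₁ * y₂, σ x₂ * y₁, σ x₂ * y₂,
        σ y₁ * x₁, σ y₁ * x₂, σ y₂ * x₁, σ y₂ * x₂} := by
    simp [Finset.insert_subset_iff]
  obtain huv | huv := ratio_eq_or_eq_inv_of_card_le_three hx hy hxx
    (hcard ▸ Finset.card_le_card hsub)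
  · exact mul_eq_mul_of_card_eq_three_of_ratio_eq hp hx hxx hyy hcard huv
  · have hswap : ({σ x₁ * y₂, σ x₁ * y₁, σ x₂ * y₂, σ x₂ * y₁,
        σ y₂ * x₁, σ y₂ * x₂, σ y₁ * x₁, σ y₁ * x₂} : Finset G).card = 3 := by
      rw [← hcard]
      congr 1
      ext
      simp only [Finset.mem_insert, Finset.mem_singleton, or_comm, or_left_comm, or_assoc]
    obtain ⟨h₁₂, h₁₁, h₂₂, h₂₁⟩ :=
      mul_eq_mul_of_card_eq_three_of_ratio_eq hp hx hxx hyy.symm hswap huv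
    exact ⟨h₁₁, h₁₂, h₂₁, h₂₂⟩

/-- Let `G` be a finite group with `p(G) > 3` and `σ` an automorphism of odd
order. Suppose `x₁ ≠ x₂`, `y₁ ≠ y₂`, `σ(x₁)·x₂ = σ(x₂)·x₁`,
`σ(y₁)·y₂ = σ(y₂)·y₁`, and the set of the eight products
`σ(xᵢ)·yⱼ, σ(yⱼ)·xᵢ` has exactly 3 elements. Then `σ(xᵢ)·yⱼ = σ(yⱼ)·xᵢ`
for all `i, j`. -/
theorem stmt_7 {G : Type*} [Group G] [Fintype G] [DecidableEq G]
    (hp : 3 < (Fintype.card G).minFac) (σ : MulAut G) (hσ : Odd (orderOf σ))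
    (x₁ x₂ y₁ y₂ : G) (hx : x₁ ≠ x₂) (hy : y₁ ≠ y₂)
    (hxx : σ x₁ * x₂ = σ x₂ * x₁) (hyy : σ y₁ * y₂ = σ y₂ * y₁)
    (hcard : ({σ x₁ * y₁, σ x₁ * y₂, σ x₂ * y₁, σ x₂ * y₂,
        σ y₁ * x₁, σ y₁ * x₂, σ y₂ * x₁, σ y₂ * x₂} : Finset G).card = 3) :
    (σ x₁ * y₁ = σ y₁ * x₁) ∧ (σ x₁ * y₂ = σ y₂ * x₁) ∧
      (σ x₂ * y₁ = σ y₁ * x₂) ∧ (σ x₂ * y₂ = σ y₂ * x₂) :=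
  stmt_7_general hp σ x₁ x₂ y₁ y₂ hx hy hxx hyy hcard
end

section
/- Let G be a finite group of odd order and let σ be an automorphism of G of odd order. Let x₁, x₂, y ∈ G. If σ(x₁)·y = σ(y)·x₂ and σ(x₂)·y = σ(y)·x₁, then x₁ = x₂. -/
/-!
Put `T x = (σ y)⁻¹ * σ x * y`; the hypotheses say exactly that `T` swaps `x₁` and `x₂`.
Composites of maps `x ↦ a * τ x * b` are again of this shape, so `T ^ orderOf σ` is a two-sided
translation `x ↦ A * x * B`, whose order divides `|G|`. Hence `T` has odd order, and a permutation
of odd order that fixes a point with its square already fixes it: `x₂ = T x₁ = x₁`.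
-/

namespace MulAction

variable {G α : Type*} [Group G] [MulAction G α]

theorem fixedBy_sq_subset_fixedBy {g : G} (hg : Odd (orderOf g)) :
    fixedBy α (g ^ 2) ⊆ fixedBy α g := by
  obtain ⟨m, hm⟩ := hg
  have hg : g = (g ^ 2) ^ (m + 1 : ℤ) := by
    rw [← zpow_natCast, ← zpow_mul, show ((2 : ℕ) : ℤ) * (m + 1) = orderOf g + 1 by omega,
      zpow_add_one, zpow_natCast, pow_orderOf_eq_one, one_mul]
  intro x hx
  rw [hg]
  exact mem_fixedBy_zpow hx _

end MulAction

namespace MulAut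

variable {G : Type*} [Group G]

def affine (σ : MulAut G) (a b : G) : Equiv.Perm G :=
  σ.toEquiv.trans ((Equiv.mulLeft a).trans (Equiv.mulRight b))

@[simp]
theorem affine_apply (σ : MulAut G) (a b x : G) : affine σ a b x = a * σ x * b :=
  rfl

theorem affine_mul_affine (σ τ : MulAut G) (a b c d : G) :
    affine σ a b * affine τ c d = affine (σ * τ) (a * σ c) (σ d * b) := by
  ext x
  simp [mul_assoc]

theorem exists_affine_pow (σ : MulAut G) (a b : G) (n : ℕ) :
    ∃ A B : G, affine σ a b ^ n = affine (σ ^ n) A B := by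
  induction n with
  | zero => exact ⟨1, 1, by ext; simp⟩
  | succ n ih =>
    obtain ⟨A, B, h⟩ := ih
    exact ⟨_, _, by rw [pow_succ', h, affine_mul_affine, ← pow_succ']⟩

theorem affine_one_pow (a b : G) (n : ℕ) : affine 1 a b ^ n = affine 1 (a ^ n) (b ^ n) := by
  induction n with
  | zero => ext; simp
  | succ n ih =>
    rw [pow_succ', ih, affine_mul_affine, one_mul, MulAut.one_apply, MulAut.one_apply, ← pow_succ',
      ← pow_succ]

theorem orderOf_affine_dvd [Finite G] (σ : MulAut G) (a b : G) :
    orderOf (affine σ a b) ∣ orderOf σ * Nat.card G := by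
  apply orderOf_dvd_of_pow_eq_one
  obtain ⟨A, B, h⟩ := exists_affine_pow σ a b (orderOf σ)
  rw [pow_mul, h, pow_orderOf_eq_one, affine_one_pow, pow_card_eq_one', pow_card_eq_one']
  ext; simp

end MulAut

/-- Let `G` be a finite group of odd order and `σ` an automorphism of odd
order. If `σ(x₁)·y = σ(y)·x₂` and `σ(x₂)·y = σ(y)·x₁`, then `x₁ = x₂`. -/
theorem stmt_9 {G : Type*} [Group G] [Fintype G] (hG : Odd (Fintype.card G))
    (σ : MulAut G) (hσ : Odd (orderOf σ)) (x₁ x₂ y : G)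
    (h1 : σ x₁ * y = σ y * x₂) (h2 : σ x₂ * y = σ y * x₁) :
    x₁ = x₂ := by
  set T := MulAut.affine σ (σ y)⁻¹ y
  have hT₁ : T x₁ = x₂ := by simp [T, mul_assoc, h1]
  have hT₂ : T x₂ = x₁ := by simp [T, mul_assoc, h2]
  have hodd : Odd (orderOf T) := by
    refine Odd.of_dvd_nat ?_ (MulAut.orderOf_affine_dvd σ _ _)
    rwa [Nat.card_eq_fintype_card, Nat.odd_mul, and_iff_right hσ]
  have hfix : T x₁ = x₁ :=
    MulAction.fixedBy_sq_subset_fixedBy hodd (show (T ^ 2) x₁ = x₁ by simp [sq, hT₁, hT₂])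
  rw [← hT₁, hfix]
end

section
/- Let G be a finite group, let h ∈ G, and let S be a non-empty subset of G with |S| < p(G), where p(G) is the least prime factor of |G|. If h·S = S (i.e., the left translate of S by h equals S), then h is the identity element of G. -/
/-! The orbit `{hᵏ s}` of any `s ∈ S` lies in `S` and has exactly `orderOf h` elements, so
`orderOf h ≤ |S| < p(G)`; as `orderOf h` divides `|G|`, it must be `1`. -/

open Finset

theorem orderOf_le_card_of_forall_mul_mem {M : Type*} [Monoid M] [IsRightCancelMul M]
    [DecidableEq M] {h : M} {S : Finset M} (hS : S.Nonempty) (hmul : ∀ x ∈ S, h * x ∈ S) :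
    orderOf h ≤ #S := by
  obtain ⟨s, hs⟩ := hS
  have hpow : ∀ k : ℕ, h ^ k * s ∈ S := by
    intro k
    induction k with
    | zero => simpa using hs
    | succ k ih => simpa only [pow_succ', mul_assoc] using hmul _ ih
  have hinj : Set.InjOn (fun k : ℕ => h ^ k * s) (range (orderOf h)) := fun a ha b hb hab =>
    pow_injOn_Iio_orderOf (by simpa using ha) (by simpa using hb) (mul_right_cancel hab)
  calc orderOf h = #((range (orderOf h)).image fun k => h ^ k * s) := by
        rw [card_image_of_injOn hinj, card_range]
    _ ≤ #S := card_le_card fun x hx => by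
        obtain ⟨k, -, rfl⟩ := mem_image.mp hx
        exact hpow k

theorem eq_one_of_orderOf_lt_minFac_card {G : Type*} [Group G] [Fintype G] {h : G}
    (hlt : orderOf h < (Fintype.card G).minFac) : h = 1 := by
  by_contra hne
  have htwo : 2 ≤ orderOf h := by
    have hpos := orderOf_pos h
    have hone : orderOf h ≠ 1 := fun h1 => hne (orderOf_eq_one_iff.mp h1)
    omega
  exact (Nat.minFac_le_of_dvd htwo orderOf_dvd_card).not_gt hlt

/-- If `S` is a non-empty subset of a finite group `G` with `|S| < p(G)` and
`h·S = S`, then `h = 1`. -/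
theorem stmt_10 {G : Type*} [Group G] [Fintype G] [DecidableEq G] (h : G) (S : Finset G)
    (hS : S.Nonempty) (hsmall : S.card < (Fintype.card G).minFac)
    (hfix : S.image (fun s => h * s) = S) :
    h = 1 := by
  have hmul : ∀ x ∈ S, h * x ∈ S := fun x hx => hfix ▸ mem_image_of_mem _ hx
  exact eq_one_of_orderOf_lt_minFac_card
    ((orderOf_le_card_of_forall_mul_mem hS hmul).trans_lt hsmall)
end

section
/- Let G be a group and let σ be an automorphism of G. Let x₁, x₂, y₁, y₂ ∈ G satisfy σ(y₁)·y₂ = σ(y₂)·y₁, σ(y₂)·x₂ = σ(x₁)·y₂, and σ(y₁)·x₂ = σ(x₂)·y₁. Then σ(x₁)·y₁ = σ(y₁)·x₁. -/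
/-!
Each hypothesis is a commutation relation in the semidirect product `G ⋊ Aut G`: writing
`â = a σ⁻¹` there, `σ(a)·b = σ(c)·d` says exactly `â b̂ = ĉ d̂`. So `ŷ₁` commutes with `ŷ₂` and `x̂₂`,
and `x̂₁ = ŷ₂ x̂₂ ŷ₂⁻¹`; hence `ŷ₁` commutes with `x̂₁`.
-/

open SemidirectProduct

section

variable {G : Type*} [Group G]

def MulAut.twist (σ : MulAut G) (a : G) : G ⋊[MonoidHom.id (MulAut G)] MulAut G :=
  ⟨a, σ⁻¹⟩

theorem MulAut.twist_mul_twist_eq_iff (σ : MulAut G) {a b c d : G} :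
    σ.twist a * σ.twist b = σ.twist c * σ.twist d ↔ σ a * b = σ c * d := by
  rw [SemidirectProduct.ext_iff]
  simp only [twist, mul_left, mul_right, MonoidHom.id_apply, and_true]
  constructor
  · intro h
    simpa using congrArg σ h
  · intro h
    simpa using congrArg σ.symm h

end

/-- Let `σ` be an automorphism of a group `G`. If `σ(y₁)·y₂ = σ(y₂)·y₁`,
`σ(y₂)·x₂ = σ(x₁)·y₂` and `σ(y₁)·x₂ = σ(x₂)·y₁`, then `σ(x₁)·y₁ = σ(y₁)·x₁`. -/
theorem stmt_12 {G : Type*} [Group G] (σ : MulAut G) (x₁ x₂ y₁ y₂ : G)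
    (h1 : σ y₁ * y₂ = σ y₂ * y₁)
    (h2 : σ y₂ * x₂ = σ x₁ * y₂)
    (h3 : σ y₁ * x₂ = σ x₂ * y₁) :
    σ x₁ * y₁ = σ y₁ * x₁ := by
  rw [← σ.twist_mul_twist_eq_iff] at h1 h2 h3 ⊢
  have hx₁ : σ.twist x₁ = σ.twist y₂ * σ.twist x₂ * (σ.twist y₂)⁻¹ :=
    eq_mul_inv_of_mul_eq h2.symm
  have hy₁y₂ : Commute (σ.twist y₁) (σ.twist y₂) := h1
  have hy₁x₁ : Commute (σ.twist y₁) (σ.twist x₁) :=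
    hx₁ ▸ (hy₁y₂.mul_right h3).mul_right hy₁y₂.inv_right
  exact hy₁x₁.eq.symm
end

section
/- Let G be a group and let σ be an automorphism of G. Let x₁, x₂, y₁, y₂ ∈ G satisfy σ(y₁)·y₂ = σ(y₂)·y₁ together with the five relations σ(x₂)·y₂ = σ(x₁)·y₁, σ(y₁)·x₂ = σ(x₁)·y₁, σ(y₂)·x₁ = σ(x₂)·y₁, σ(y₂)·x₂ = σ(x₁)·y₂, and σ(y₁)·x₁ = σ(x₁)·y₂. Then (y₁·y₂⁻¹)³ is the identity element of G; in particular, if G is finite with p(G) > 3, then y₁ = y₂. -/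
/-!
Write `y₁ = u y₂` and `σ(x₁) = σ(y₂) c`. The first two relations give `σ(y₁) = σ(y₂) u` and
`σ(x₂) = σ(y₂) c u`; cancelling `σ(y₂)`, the relations for `σ(y₂) x₂` and `σ(y₂) x₁` then give
`x₂ = c y₂` and `x₁ = c u² y₂`. Substituted into the relation for `σ(y₁) x₂`, this says that `u`
commutes with `c`, and the relation for `σ(y₁) x₁` becomes `u c u² = c`, i.e. `u³ = 1`. In a
finite group whose order is prime to `3`, cubing is injective, so `u = 1`.
-/

theorem mul_inv_pow_three_eq_one_of_twisted_relations {G : Type*} [Group G] (σ : G → G)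
    {x₁ x₂ y₁ y₂ : G}
    (hyy : σ y₁ * y₂ = σ y₂ * y₁)
    (h1 : σ x₂ * y₂ = σ x₁ * y₁)
    (h2 : σ y₁ * x₂ = σ x₁ * y₁)
    (h3 : σ y₂ * x₁ = σ x₂ * y₁)
    (h4 : σ y₂ * x₂ = σ x₁ * y₂)
    (h5 : σ y₁ * x₁ = σ x₁ * y₂) :
    (y₁ * y₂⁻¹) ^ 3 = 1 := by
  obtain ⟨u, rfl⟩ : ∃ u, y₁ = u * y₂ := ⟨y₁ * y₂⁻¹, by group⟩
  obtain ⟨c, hc⟩ : ∃ c, σ x₁ = σ y₂ * c := ⟨(σ y₂)⁻¹ * σ x₁, by group⟩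
  rw [hc] at h1 h2 h4 h5
  have hσy₁ : σ (u * y₂) = σ y₂ * u := by
    simpa only [← mul_assoc, mul_left_inj] using hyy
  have hσx₂ : σ x₂ = σ y₂ * c * u := by
    simpa only [← mul_assoc, mul_left_inj] using h1
  have hx₂ : x₂ = c * y₂ := by
    simpa only [mul_assoc, mul_right_inj] using h4
  have hx₁ : x₁ = c * u * u * y₂ := by
    rw [hσx₂] at h3
    simpa only [mul_assoc, mul_right_inj] using h3
  have hcomm : u * c = c * u := by
    rw [hσy₁, hx₂] at h2
    simp only [mul_assoc, mul_right_inj] at h2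
    simpa only [← mul_assoc, mul_left_inj] using h2
  have hcube : c * (u * u * u) = c := by
    rw [hσy₁, hx₁] at h5
    simp only [mul_assoc, mul_right_inj] at h5
    simpa only [← mul_assoc, mul_left_inj, hcomm] using h5
  rw [mul_inv_cancel_right, pow_three, ← mul_assoc]
  exact mul_eq_left.mp hcube

theorem eq_one_of_pow_eq_one_of_lt_minFac_card {G : Type*} [Group G] {p : ℕ} (hp : p.Prime)
    (hlt : p < (Nat.card G).minFac) {g : G} (hg : g ^ p = 1) : g = 1 := by
  have hndvd : ¬p ∣ Nat.card G := fun hdvd => (Nat.minFac_le_of_dvd hp.two_le hdvd).not_gt hlt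
  have hcop : (Nat.card G).Coprime p := ((Nat.Prime.coprime_iff_not_dvd hp).mpr hndvd).symm
  exact hcop.pow_left_bijective.injective (by rw [hg, one_pow])

/-- Let `σ` be an automorphism of a group `G` and suppose
`σ(y₁)·y₂ = σ(y₂)·y₁` together with the five listed relations. Then
`(y₁·y₂⁻¹)³ = 1`; in particular, if `G` is finite with `p(G) > 3`, then
`y₁ = y₂`. -/
theorem stmt_13 {G : Type*} [Group G] [Fintype G] (σ : MulAut G)
    (x₁ x₂ y₁ y₂ : G)
    (hyy : σ y₁ * y₂ = σ y₂ * y₁)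
    (h1 : σ x₂ * y₂ = σ x₁ * y₁)
    (h2 : σ y₁ * x₂ = σ x₁ * y₁)
    (h3 : σ y₂ * x₁ = σ x₂ * y₁)
    (h4 : σ y₂ * x₂ = σ x₁ * y₂)
    (h5 : σ y₁ * x₁ = σ x₁ * y₂) :
    (y₁ * y₂⁻¹) ^ 3 = 1 ∧ (3 < (Fintype.card G).minFac → y₁ = y₂) := by
  have hcube := mul_inv_pow_three_eq_one_of_twisted_relations σ hyy h1 h2 h3 h4 h5
  refine ⟨hcube, fun h3lt => ?_⟩
  rw [← Nat.card_eq_fintype_card] at h3lt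
  exact mul_inv_eq_one.mp (eq_one_of_pow_eq_one_of_lt_minFac_card Nat.prime_three h3lt hcube)
end
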